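/- arXiv:2108.12852 — 2 statements merged into one kernel-verified Lean document; each statement's English description precedes it below -/
import Mathlib

section
/- Let V, g, W be real vector spaces, ▷ : g × W → W bilinear, ⟨,⟩_g a symmetric bilinear form on g, ⟨,⟩_W a symmetric bilinear form on W, and σ : W × W → g a bilinear map satisfying ⟨σ(Y, Y'), X⟩_g = −⟨Y, X ▷ Y'⟩_W for all X ∈ g, Y, Y' ∈ W. For W-valued alternating forms B₁, B₂ on V of degrees t₁, t₂ define σ̄(B₁, B₂) := B₁ ∧_σ B₂. Then for every g-valued alternating k-form A on V, ⟨σ̄(B₁, B₂), A⟩ = (−1)^{kt₂+1} ⟨B₁, A ∧^▷ B₂⟩ and ⟨A, σ̄(B₁, B₂)⟩ = (−1)^{t₁t₂+1} ⟨A ∧^▷ B₂, B₁⟩, where ⟨,⟩ on forms denotes wedge along ⟨,⟩_g (when one argument is g-valued) or along ⟨,⟩_W (when both are W-valued). -/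
/-! On skew-symmetric arguments, the shuffle sum defining `wedgeRaw μ ω η` equals `(a! b!)⁻¹`
times the sum of `sign π • μ (ω _) (η _)` over all permutations `π`, because every permutation
factors uniquely as a shuffle followed by a permutation of each block. Consequently a nested
wedge of three forms, bracketed either way, is `(a! b! c!)⁻¹` times the full alternation of the
corresponding triple product. The relation `⟨σ(Y, Y'), X⟩ = -⟨Y, X ▷ Y'⟩` identifies the triple
products on the two sides of each identity up to sign and an exchange of the last two blocks,
and exchanging adjacent blocks of sizes `b` and `c` costs `(-1)^(bc)`. -/

def shuffleSet (k₁ k₂ : ℕ) : Finset (Equiv.Perm (Fin (k₁ + k₂))) :=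
  Finset.univ.filter fun σ =>
    (∀ i j : Fin k₁, i < j → σ (Fin.castAdd k₂ i) < σ (Fin.castAdd k₂ j)) ∧
    (∀ i j : Fin k₂, i < j → σ (Fin.natAdd k₁ i) < σ (Fin.natAdd k₁ j))

def wedgeRaw {V E F W : Type*} [AddCommGroup E] [Module ℝ E] [AddCommGroup F] [Module ℝ F]
    [AddCommGroup W] [Module ℝ W] {k₁ k₂ : ℕ}
    (μ : E →ₗ[ℝ] F →ₗ[ℝ] W)
    (ω : (Fin k₁ → V) → E) (η : (Fin k₂ → V) → F) :
    (Fin (k₁ + k₂) → V) → W :=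
  fun v => ∑ σ ∈ shuffleSet k₁ k₂,
    (Equiv.Perm.sign σ : ℤ) •
      μ (ω fun i => v (σ (Fin.castAdd k₂ i))) (η fun i => v (σ (Fin.natAdd k₁ i)))

def castRaw {V W : Type*} {k k' : ℕ} (h : k = k') (ω : (Fin k → V) → W) :
    (Fin k' → V) → W :=
  fun v => ω fun i => v (Fin.cast h i)

open Equiv
open scoped Nat

section BlockPerm

variable {a b : ℕ}

def blockPerm (a b : ℕ) : Perm (Fin a) × Perm (Fin b) →* Perm (Fin (a + b)) :=
  finSumFinEquiv.permCongrHom.toMonoidHom.comp (Perm.sumCongrHom (Fin a) (Fin b))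

@[simp] lemma blockPerm_castAdd (τ : Perm (Fin a) × Perm (Fin b)) (i : Fin a) :
    blockPerm a b τ (Fin.castAdd b i) = Fin.castAdd b (τ.1 i) := by
  simp [blockPerm, permCongrHom_coe, permCongr_apply]

@[simp] lemma blockPerm_natAdd (τ : Perm (Fin a) × Perm (Fin b)) (i : Fin b) :
    blockPerm a b τ (Fin.natAdd a i) = Fin.natAdd a (τ.2 i) := by
  simp [blockPerm, permCongrHom_coe, permCongr_apply]

@[simp] lemma sign_blockPerm (τ : Perm (Fin a) × Perm (Fin b)) :
    Perm.sign (blockPerm a b τ) = Perm.sign τ.1 * Perm.sign τ.2 := by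
  simp [blockPerm, permCongrHom_coe, Perm.sign_permCongr, Perm.sign_sumCongr]

lemma comp_blockPerm_comp_castAdd {α : Type*} (f : Fin (a + b) → α)
    (τ : Perm (Fin a) × Perm (Fin b)) :
    (f ∘ blockPerm a b τ) ∘ Fin.castAdd b = (f ∘ Fin.castAdd b) ∘ τ.1 := by
  ext; simp

lemma comp_blockPerm_comp_natAdd {α : Type*} (f : Fin (a + b) → α)
    (τ : Perm (Fin a) × Perm (Fin b)) :
    (f ∘ blockPerm a b τ) ∘ Fin.natAdd a = (f ∘ Fin.natAdd a) ∘ τ.2 := by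
  ext; simp

end BlockPerm

lemma Tuple.sort_comp_perm_of_strictMono {α : Type*} [LinearOrder α] {n : ℕ} {g : Fin n → α}
    (hg : StrictMono g) (τ : Perm (Fin n)) : Tuple.sort (g ∘ τ) = τ⁻¹ := by
  refine (Tuple.eq_sort_iff.2 ⟨?_, fun i j hij h => ?_⟩).symm
  · simpa [Function.comp_def] using hg.monotone
  · exact absurd (hg.injective (by simpa using h)) hij.ne

section Shuffles

variable {a b : ℕ}

lemma mem_shuffleSet {σ : Perm (Fin (a + b))} :
    σ ∈ shuffleSet a b ↔ StrictMono (σ ∘ Fin.castAdd b) ∧ StrictMono (σ ∘ Fin.natAdd a) := by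
  simp [shuffleSet, StrictMono]

def blockSort (π : Perm (Fin (a + b))) : Perm (Fin a) × Perm (Fin b) :=
  (Tuple.sort (π ∘ Fin.castAdd b), Tuple.sort (π ∘ Fin.natAdd a))

lemma mul_blockPerm_blockSort_mem_shuffleSet (π : Perm (Fin (a + b))) :
    π * blockPerm a b (blockSort π) ∈ shuffleSet a b := by
  rw [mem_shuffleSet, Perm.coe_mul, comp_blockPerm_comp_castAdd, comp_blockPerm_comp_natAdd]
  exact ⟨(Tuple.monotone_sort _).strictMono_of_injective
      ((π.injective.comp (Fin.castAdd_injective a b)).comp (Equiv.injective _)),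
    (Tuple.monotone_sort _).strictMono_of_injective
      ((π.injective.comp (Fin.natAdd_injective b a)).comp (Equiv.injective _))⟩

lemma blockSort_mul_blockPerm {σ : Perm (Fin (a + b))} (hσ : σ ∈ shuffleSet a b)
    (τ : Perm (Fin a) × Perm (Fin b)) : blockSort (σ * blockPerm a b τ) = τ⁻¹ := by
  obtain ⟨h₁, h₂⟩ := mem_shuffleSet.1 hσ
  rw [blockSort, Perm.coe_mul, comp_blockPerm_comp_castAdd, comp_blockPerm_comp_natAdd,
    Tuple.sort_comp_perm_of_strictMono h₁, Tuple.sort_comp_perm_of_strictMono h₂]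
  rfl

lemma sum_perm_eq_sum_shuffleSet {M : Type*} [AddCommMonoid M] (G : Perm (Fin (a + b)) → M) :
    ∑ π, G π
      = ∑ σ ∈ shuffleSet a b, ∑ τ : Perm (Fin a) × Perm (Fin b), G (σ * blockPerm a b τ) := by
  rw [← Finset.sum_product' (f := fun σ τ => G (σ * blockPerm a b τ))]
  refine Finset.sum_nbij' (fun π => (π * blockPerm a b (blockSort π), (blockSort π)⁻¹))
    (fun x => x.1 * blockPerm a b x.2) ?_ (by simp) ?_ ?_ ?_
  · intro π _
    simpa using mul_blockPerm_blockSort_mem_shuffleSet π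
  · intro π _
    simp [mul_assoc]
  · rintro ⟨σ, τ⟩ hσ
    rw [Finset.mem_product] at hσ
    simp [blockSort_mul_blockPerm hσ.1, mul_assoc]
  · intro π _
    simp [mul_assoc]

end Shuffles

section Alternatization

variable {V M : Type*} [AddCommGroup M]

def IsSkewSymmetric {n : ℕ} (ω : (Fin n → V) → M) : Prop :=
  ∀ (w : Fin n → V) (τ : Perm (Fin n)), ω (w ∘ τ) = (Perm.sign τ : ℤ) • ω w

lemma AlternatingMap.isSkewSymmetric {R : Type*} [Semiring R] [AddCommGroup V] [Module R V]
    [Module R M] {n : ℕ} (B : AlternatingMap R V M (Fin n)) : IsSkewSymmetric ⇑B := fun w τ => by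
  simpa [Units.smul_def] using B.map_perm w τ

def alternatizeRaw {n : ℕ} (F : (Fin n → V) → M) (v : Fin n → V) : M :=
  ∑ π : Perm (Fin n), (Perm.sign π : ℤ) • F (v ∘ π)

lemma alternatizeRaw_comp_perm {n : ℕ} (F : (Fin n → V) → M) (v : Fin n → V)
    (τ : Perm (Fin n)) : alternatizeRaw F (v ∘ τ) = (Perm.sign τ : ℤ) • alternatizeRaw F v := by
  rw [alternatizeRaw, alternatizeRaw, Finset.smul_sum]
  refine Fintype.sum_equiv (Equiv.mulLeft τ) _ _ fun π => ?_
  simp [smul_smul, ← mul_assoc, Function.comp_assoc]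

lemma alternatizeRaw_comp_equiv {m n : ℕ} (F : (Fin m → V) → M) (e : Fin m ≃ Fin n)
    (v : Fin n → V) : alternatizeRaw (fun u => F (u ∘ e)) v = alternatizeRaw F (v ∘ e) := by
  refine (Fintype.sum_equiv e.permCongr _ _ fun π => ?_).symm
  simp [Perm.sign_permCongr, Function.comp_def, permCongr_apply]

lemma alternatizeRaw_comp_right {n : ℕ} (F : (Fin n → V) → M) (v : Fin n → V)
    (τ : Perm (Fin n)) :
    alternatizeRaw (fun u => F (u ∘ τ)) v = (Perm.sign τ : ℤ) • alternatizeRaw F v := by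
  rw [alternatizeRaw_comp_equiv, alternatizeRaw_comp_perm]

lemma alternatizeRaw_neg {n : ℕ} (F : (Fin n → V) → M) :
    alternatizeRaw (-F) = -alternatizeRaw F := by
  ext v; simp [alternatizeRaw]

lemma alternatizeRaw_smul [Module ℝ M] {n : ℕ} (c : ℝ) (F : (Fin n → V) → M) :
    alternatizeRaw (c • F) = c • alternatizeRaw F := by
  ext v; simp [alternatizeRaw, Finset.smul_sum, smul_comm c]

lemma alternatizeRaw_sum_sign_smul_comp {k n : ℕ} (F : (Fin n → V) → M)
    (f : Perm (Fin k) → Perm (Fin n)) (hf : ∀ ρ, Perm.sign (f ρ) = Perm.sign ρ) (v : Fin n → V) :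
    alternatizeRaw (fun u => ∑ ρ, (Perm.sign ρ : ℤ) • F (u ∘ f ρ)) v
      = k ! • alternatizeRaw F v := by
  have hρ (ρ : Perm (Fin k)) :
      (Perm.sign ρ : ℤ) • alternatizeRaw (fun u => F (u ∘ f ρ)) v = alternatizeRaw F v := by
    rw [alternatizeRaw_comp_right, hf, smul_smul, Int.units_coe_mul_self, one_smul]
  calc alternatizeRaw (fun u => ∑ ρ, (Perm.sign ρ : ℤ) • F (u ∘ f ρ)) v
      = ∑ ρ, (Perm.sign ρ : ℤ) • alternatizeRaw (fun u => F (u ∘ f ρ)) v := by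
        simp only [alternatizeRaw, Finset.smul_sum]
        rw [Finset.sum_comm]
        exact Finset.sum_congr rfl fun ρ _ => Finset.sum_congr rfl fun π _ => smul_comm _ _ _
    _ = k ! • alternatizeRaw F v := by
        simp only [hρ, Finset.sum_const, Finset.card_univ, Fintype.card_perm, Fintype.card_fin]

end Alternatization

section BlockSwap

variable {V M : Type*} [AddCommGroup M] {a b c : ℕ}

lemma val_finRotate_pow_apply {n : ℕ} (x : Fin n) (m : ℕ) :
    ((finRotate n ^ m) x : ℕ) = (x + m) % n := by
  have : NeZero n := x.neZero
  induction m with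
  | zero => simp [Nat.mod_eq_of_lt x.isLt]
  | succ m ih =>
    rw [pow_succ', Perm.mul_apply, finRotate_apply, Fin.val_add, ih, Fin.val_one', Nat.add_mod_mod,
      Nat.mod_add_mod, add_assoc]

lemma sign_finRotate_add_pow (b c : ℕ) :
    Perm.sign (finRotate (c + b) ^ b) = (-1) ^ (b * c) := by
  rw [map_pow, sign_finRotate, ← pow_mul]
  rcases b with _ | b
  · simp
  · rw [Nat.add_succ_sub_one, show (c + b) * (b + 1) = (b + 1) * c + b * (b + 1) by ring, pow_add,
      (Nat.even_mul_succ_self b).neg_one_pow, mul_one]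

def swapLastBlocks (a b c : ℕ) : Fin (a + (c + b)) ≃ Fin (a + b + c) :=
  (blockPerm a (c + b) (1, finRotate (c + b) ^ b)).trans (finCongr (by omega))

@[simp] lemma swapLastBlocks_castAdd (i : Fin a) :
    swapLastBlocks a b c (Fin.castAdd (c + b) i) = Fin.castAdd c (Fin.castAdd b i) := by
  ext; simp [swapLastBlocks]

@[simp] lemma swapLastBlocks_natAdd_castAdd (i : Fin c) :
    swapLastBlocks a b c (Fin.natAdd a (Fin.castAdd b i)) = Fin.natAdd (a + b) i := by
  ext
  simp only [swapLastBlocks, trans_apply, finCongr_apply, Fin.val_cast, blockPerm_natAdd,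
    Fin.val_natAdd, val_finRotate_pow_apply, Fin.val_castAdd]
  rw [Nat.mod_eq_of_lt (by omega)]
  omega

@[simp] lemma swapLastBlocks_natAdd_natAdd (i : Fin b) :
    swapLastBlocks a b c (Fin.natAdd a (Fin.natAdd c i)) = Fin.castAdd c (Fin.natAdd a i) := by
  ext
  simp only [swapLastBlocks, trans_apply, finCongr_apply, Fin.val_cast, blockPerm_natAdd,
    Fin.val_natAdd, val_finRotate_pow_apply, Fin.val_castAdd]
  rw [add_right_comm, Nat.add_mod_left, Nat.mod_eq_of_lt (by omega)]

lemma alternatizeRaw_comp_swapLastBlocks (F : (Fin (a + (c + b)) → V) → M)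
    (h : a + (c + b) = a + b + c) (v : Fin (a + b + c) → V) :
    alternatizeRaw (fun u => F (u ∘ swapLastBlocks a b c)) v
      = (-1 : ℤ) ^ (b * c) • alternatizeRaw F (v ∘ Fin.cast h) := by
  rw [alternatizeRaw_comp_equiv]
  exact (alternatizeRaw_comp_perm F (v ∘ Fin.cast h) _).trans (by simp [sign_finRotate_add_pow])

end BlockSwap

section Tensor

variable {V E₁ E₂ E₃ X W : Type*} [AddCommGroup E₁] [Module ℝ E₁] [AddCommGroup E₂]
  [Module ℝ E₂] [AddCommGroup E₃] [Module ℝ E₃] [AddCommGroup X] [Module ℝ X]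
  [AddCommGroup W] [Module ℝ W] {a b c : ℕ}

def tensorRaw (μ : E₁ →ₗ[ℝ] E₂ →ₗ[ℝ] W) (ω : (Fin a → V) → E₁) (η : (Fin b → V) → E₂)
    (v : Fin (a + b) → V) : W :=
  μ (ω (v ∘ Fin.castAdd b)) (η (v ∘ Fin.natAdd a))

lemma wedgeRaw_apply (μ : E₁ →ₗ[ℝ] E₂ →ₗ[ℝ] W) (ω : (Fin a → V) → E₁) (η : (Fin b → V) → E₂)
    (v : Fin (a + b) → V) :
    wedgeRaw μ ω η v = ∑ σ ∈ shuffleSet a b, (Perm.sign σ : ℤ) • tensorRaw μ ω η (v ∘ σ) :=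
  rfl

lemma tensorRaw_smul_left (μ : E₁ →ₗ[ℝ] E₂ →ₗ[ℝ] W) (r : ℝ) (ω : (Fin a → V) → E₁)
    (η : (Fin b → V) → E₂) : tensorRaw μ (r • ω) η = r • tensorRaw μ ω η := by
  ext v; simp [tensorRaw]

lemma tensorRaw_smul_right (μ : E₁ →ₗ[ℝ] E₂ →ₗ[ℝ] W) (ω : (Fin a → V) → E₁) (r : ℝ)
    (η : (Fin b → V) → E₂) : tensorRaw μ ω (r • η) = r • tensorRaw μ ω η := by
  ext v; simp [tensorRaw]

lemma tensorRaw_comp_blockPerm (μ : E₁ →ₗ[ℝ] E₂ →ₗ[ℝ] W) {ω : (Fin a → V) → E₁}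
    {η : (Fin b → V) → E₂} (hω : IsSkewSymmetric ω) (hη : IsSkewSymmetric η)
    (v : Fin (a + b) → V) (τ : Perm (Fin a) × Perm (Fin b)) :
    tensorRaw μ ω η (v ∘ blockPerm a b τ)
      = (Perm.sign (blockPerm a b τ) : ℤ) • tensorRaw μ ω η v := by
  simp only [tensorRaw, comp_blockPerm_comp_castAdd, comp_blockPerm_comp_natAdd, hω _ τ.1,
    hη _ τ.2, map_zsmul, LinearMap.smul_apply, smul_smul, sign_blockPerm, Units.val_mul, mul_comm]

lemma alternatizeRaw_tensorRaw (μ : E₁ →ₗ[ℝ] E₂ →ₗ[ℝ] W) {ω : (Fin a → V) → E₁}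
    {η : (Fin b → V) → E₂} (hω : IsSkewSymmetric ω) (hη : IsSkewSymmetric η)
    (v : Fin (a + b) → V) :
    alternatizeRaw (tensorRaw μ ω η) v = (a ! * b !) • wedgeRaw μ ω η v := by
  rw [alternatizeRaw, sum_perm_eq_sum_shuffleSet, wedgeRaw_apply, Finset.smul_sum]
  refine Finset.sum_congr rfl fun σ _ => ?_
  have hterm (τ : Perm (Fin a) × Perm (Fin b)) :
      (Perm.sign (σ * blockPerm a b τ) : ℤ) • tensorRaw μ ω η (v ∘ ⇑(σ * blockPerm a b τ))
        = (Perm.sign σ : ℤ) • tensorRaw μ ω η (v ∘ σ) := by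
    rw [Perm.coe_mul, ← Function.comp_assoc, tensorRaw_comp_blockPerm μ hω hη, smul_smul,
      map_mul, Units.val_mul, mul_assoc, Int.units_coe_mul_self, mul_one]
  rw [Finset.sum_congr rfl fun τ _ => hterm τ, Finset.sum_const, Finset.card_univ,
    Fintype.card_prod, Fintype.card_perm, Fintype.card_perm, Fintype.card_fin, Fintype.card_fin]

lemma wedgeRaw_eq_smul_alternatizeRaw (μ : E₁ →ₗ[ℝ] E₂ →ₗ[ℝ] W) {ω : (Fin a → V) → E₁}
    {η : (Fin b → V) → E₂} (hω : IsSkewSymmetric ω) (hη : IsSkewSymmetric η) :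
    wedgeRaw μ ω η = ((a ! * b ! : ℝ)⁻¹) • alternatizeRaw (tensorRaw μ ω η) := by
  ext v
  rw [Pi.smul_apply, alternatizeRaw_tensorRaw μ hω hη, ← Nat.cast_smul_eq_nsmul ℝ, smul_smul,
    Nat.cast_mul, inv_mul_cancel₀ (by positivity), one_smul]

lemma isSkewSymmetric_wedgeRaw (μ : E₁ →ₗ[ℝ] E₂ →ₗ[ℝ] W) {ω : (Fin a → V) → E₁}
    {η : (Fin b → V) → E₂} (hω : IsSkewSymmetric ω) (hη : IsSkewSymmetric η) :
    IsSkewSymmetric (wedgeRaw μ ω η) := fun w τ => by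
  simp only [wedgeRaw_eq_smul_alternatizeRaw μ hω hη, Pi.smul_apply, alternatizeRaw_comp_perm]
  exact smul_comm _ _ _

lemma alternatizeRaw_tensorRaw_alternatizeRaw_left {n : ℕ} (μ : X →ₗ[ℝ] E₃ →ₗ[ℝ] W)
    (Φ : (Fin n → V) → X) (θ : (Fin c → V) → E₃) :
    alternatizeRaw (tensorRaw μ (alternatizeRaw Φ) θ)
      = n ! • alternatizeRaw (tensorRaw μ Φ θ) := by
  have hexp : tensorRaw μ (alternatizeRaw Φ) θ = fun u =>
      ∑ ρ : Perm (Fin n), (Perm.sign ρ : ℤ) • tensorRaw μ Φ θ (u ∘ blockPerm n c (ρ, 1)) := by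
    ext u
    simp [tensorRaw, alternatizeRaw, Function.comp_def]
  ext v
  rw [hexp, alternatizeRaw_sum_sign_smul_comp _ _ (by simp), Pi.smul_apply]

lemma alternatizeRaw_tensorRaw_alternatizeRaw_right {n : ℕ} (μ : E₁ →ₗ[ℝ] X →ₗ[ℝ] W)
    (θ : (Fin c → V) → E₁) (Φ : (Fin n → V) → X) :
    alternatizeRaw (tensorRaw μ θ (alternatizeRaw Φ))
      = n ! • alternatizeRaw (tensorRaw μ θ Φ) := by
  have hexp : tensorRaw μ θ (alternatizeRaw Φ) = fun u =>
      ∑ ρ : Perm (Fin n), (Perm.sign ρ : ℤ) • tensorRaw μ θ Φ (u ∘ blockPerm c n (1, ρ)) := by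
    ext u
    simp [tensorRaw, alternatizeRaw, Function.comp_def]
  ext v
  rw [hexp, alternatizeRaw_sum_sign_smul_comp _ _ (by simp), Pi.smul_apply]

lemma wedgeRaw_wedgeRaw_left (μ : X →ₗ[ℝ] E₃ →ₗ[ℝ] W) (ν : E₁ →ₗ[ℝ] E₂ →ₗ[ℝ] X)
    {ω : (Fin a → V) → E₁} {η : (Fin b → V) → E₂} {θ : (Fin c → V) → E₃}
    (hω : IsSkewSymmetric ω) (hη : IsSkewSymmetric η) (hθ : IsSkewSymmetric θ) :
    wedgeRaw μ (wedgeRaw ν ω η) θ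
      = ((a ! * b ! * c ! : ℝ)⁻¹) • alternatizeRaw (tensorRaw μ (tensorRaw ν ω η) θ) := by
  rw [wedgeRaw_eq_smul_alternatizeRaw μ (isSkewSymmetric_wedgeRaw ν hω hη) hθ,
    wedgeRaw_eq_smul_alternatizeRaw ν hω hη, tensorRaw_smul_left, alternatizeRaw_smul,
    alternatizeRaw_tensorRaw_alternatizeRaw_left, ← Nat.cast_smul_eq_nsmul ℝ, smul_smul, smul_smul]
  congr 1
  field_simp

lemma wedgeRaw_wedgeRaw_right (μ : E₁ →ₗ[ℝ] X →ₗ[ℝ] W) (ν : E₂ →ₗ[ℝ] E₃ →ₗ[ℝ] X)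
    {ω : (Fin a → V) → E₁} {η : (Fin b → V) → E₂} {θ : (Fin c → V) → E₃}
    (hω : IsSkewSymmetric ω) (hη : IsSkewSymmetric η) (hθ : IsSkewSymmetric θ) :
    wedgeRaw μ ω (wedgeRaw ν η θ)
      = ((a ! * b ! * c ! : ℝ)⁻¹) • alternatizeRaw (tensorRaw μ ω (tensorRaw ν η θ)) := by
  rw [wedgeRaw_eq_smul_alternatizeRaw μ hω (isSkewSymmetric_wedgeRaw ν hη hθ),
    wedgeRaw_eq_smul_alternatizeRaw ν hη hθ, tensorRaw_smul_right, alternatizeRaw_smul,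
    alternatizeRaw_tensorRaw_alternatizeRaw_right, ← Nat.cast_smul_eq_nsmul ℝ, smul_smul, smul_smul]
  congr 1
  field_simp

end Tensor

/-- with `▷ : g × W → W` bilinear, `⟨,⟩_g`, `⟨,⟩_W` symmetric bilinear
forms and `σ : W × W → g` bilinear with `⟨σ(Y,Y'), X⟩_g = −⟨Y, X ▷ Y'⟩_W`, setting
`σ̄(B₁,B₂) := B₁ ∧_σ B₂` for `W`-valued alternating forms `B₁, B₂` of degrees `t₁, t₂`,
every `g`-valued alternating `k`-form `A` satisfies
`⟨σ̄(B₁,B₂), A⟩ = (−1)^{kt₂+1} ⟨B₁, A ∧^▷ B₂⟩` and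
`⟨A, σ̄(B₁,B₂)⟩ = (−1)^{t₁t₂+1} ⟨A ∧^▷ B₂, B₁⟩`. -/
theorem stmt11 {V g W : Type*} [AddCommGroup V] [Module ℝ V] [AddCommGroup g] [Module ℝ g]
    [AddCommGroup W] [Module ℝ W]
    (ρ : g →ₗ[ℝ] W →ₗ[ℝ] W)
    (Bg : g →ₗ[ℝ] g →ₗ[ℝ] ℝ) (BW : W →ₗ[ℝ] W →ₗ[ℝ] ℝ)
    (hBgsymm : ∀ X X' : g, Bg X X' = Bg X' X)
    (hBWsymm : ∀ Y Y' : W, BW Y Y' = BW Y' Y)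
    (σm : W →ₗ[ℝ] W →ₗ[ℝ] g)
    (hσ : ∀ (X : g) (Y Y' : W), Bg (σm Y Y') X = - BW Y (ρ X Y'))
    {k t₁ t₂ : ℕ} (A : AlternatingMap ℝ V g (Fin k))
    (B₁ : AlternatingMap ℝ V W (Fin t₁)) (B₂ : AlternatingMap ℝ V W (Fin t₂)) :
    wedgeRaw Bg (wedgeRaw σm ⇑B₁ ⇑B₂) ⇑A
      = (-1 : ℝ) ^ (k * t₂ + 1) •
          castRaw (show t₁ + (k + t₂) = t₁ + t₂ + k by omega)
            (wedgeRaw BW ⇑B₁ (wedgeRaw ρ ⇑A ⇑B₂))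
    ∧ wedgeRaw Bg ⇑A (wedgeRaw σm ⇑B₁ ⇑B₂)
      = (-1 : ℝ) ^ (t₁ * t₂ + 1) •
          castRaw (show k + t₂ + t₁ = k + (t₁ + t₂) by omega)
            (wedgeRaw BW (wedgeRaw ρ ⇑A ⇑B₂) ⇑B₁) := by
  have hA := A.isSkewSymmetric
  have hB₁ := B₁.isSkewSymmetric
  have hB₂ := B₂.isSkewSymmetric
  have hσ' (X : g) (Y Y' : W) : Bg X (σm Y Y') = -BW (ρ X Y') Y := by
    rw [hBgsymm, hσ, hBWsymm]
  have hswap₁ : tensorRaw Bg (tensorRaw σm B₁ B₂) A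
      = -fun u => tensorRaw BW B₁ (tensorRaw ρ A B₂) (u ∘ swapLastBlocks t₁ t₂ k) := by
    ext u; simp [tensorRaw, hσ, Function.comp_def]
  have hswap₂ : tensorRaw BW (tensorRaw ρ A B₂) B₁
      = -fun u => tensorRaw Bg A (tensorRaw σm B₁ B₂) (u ∘ swapLastBlocks k t₂ t₁) := by
    ext u; simp [tensorRaw, hσ', Function.comp_def]
  constructor <;> ext v
  · simp only [wedgeRaw_wedgeRaw_left Bg σm hB₁ hB₂ hA, wedgeRaw_wedgeRaw_right BW ρ hB₁ hA hB₂,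
      castRaw, hswap₁, alternatizeRaw_neg, Pi.smul_apply, Pi.neg_apply]
    rw [alternatizeRaw_comp_swapLastBlocks _ (by omega)]
    simp only [smul_eq_mul, zsmul_eq_mul, Function.comp_def]
    push_cast
    ring
  · simp only [wedgeRaw_wedgeRaw_right Bg σm hA hB₁ hB₂, wedgeRaw_wedgeRaw_left BW ρ hA hB₂ hB₁,
      castRaw, hswap₂, alternatizeRaw_neg, Pi.smul_apply, Pi.neg_apply]
    rw [alternatizeRaw_comp_swapLastBlocks _ (by omega)]
    simp only [smul_eq_mul, zsmul_eq_mul, Function.comp_def, Fin.cast_cast, Fin.cast_eq_self]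
    push_cast
    ring_nf
    simp
end

section
/- Let g be a finite-dimensional real Lie algebra, h and l finite-dimensional real vector spaces, α̃ : h → g and β̃ : l → h linear maps, ▷ : g × h → h and ▷ : g × l → l bilinear maps such that ▷ on h is a Lie algebra action ([X, X'] ▷ Y = X ▷ (X' ▷ Y) − X' ▷ (X ▷ Y)) and β̃ is equivariant (β̃(X ▷ Z) = X ▷ β̃(Z) for X ∈ g, Z ∈ l), and {,} : h × h → l a bilinear map. On an open set U ⊆ ℝ^d, let A be a smooth g-valued 1-form, B a smooth h-valued 2-form and C a smooth l-valued 3-form, and set F₁ := dA + ½ A ∧^{[,]} A − α̃ ∘ B, F₂ := dB + A ∧^▷ B − β̃ ∘ C, and Ω₃ := dC + A ∧^▷ C + B ∧^{{,}} B. Then the second 3-Bianchi identity holds: dF₂ + A ∧^▷ F₂ = (F₁ + α̃ ∘ B) ∧^▷ B − β̃ ∘ (Ω₃ − B ∧^{{,}} B). -/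
/-! The exterior derivative of a smooth vector-valued differential form, given pointwise
by `(dω)_x(v₀,…,v_k) = Σ_{i=0}^{k} (−1)^i (Dω(x)·v_i)(v₀,…,v̂ᵢ,…,v_k)`, where `D` is the
Fréchet derivative and `v̂ᵢ` denotes omission of the `i`-th vector. A smooth `W`-valued
differential `k`-form on an open set `U ⊆ ℝ^d` is a map `ω` from `ℝ^d` to the space of
`W`-valued alternating `k`-forms on `ℝ^d` which is smooth on `U`, smoothness being
expressed by requiring every evaluation `x ↦ ω x v` to be `C^∞` on `U`. -/

/-- The exterior derivative, defined on the underlying functions of vector-valued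
differential forms via the Fréchet derivative. -/
noncomputable def extDerivRaw {X W : Type*} [NormedAddCommGroup X] [NormedSpace ℝ X]
    [NormedAddCommGroup W] [NormedSpace ℝ W] {k : ℕ}
    (ω : X → (Fin k → X) → W) (x : X) : (Fin (k + 1) → X) → W :=
  fun v => ∑ i : Fin (k + 1),
    (-1 : ℤ) ^ (i : ℕ) • fderiv ℝ (fun y => ω y (v ∘ i.succAbove)) x (v i)

/-- A form-valued map is smooth on `U` iff all its evaluations are. -/
def SmoothFormOn {X E : Type*} [NormedAddCommGroup X] [NormedSpace ℝ X]
    [NormedAddCommGroup E] [NormedSpace ℝ E] {k : ℕ}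
    (ω : X → AlternatingMap ℝ X E (Fin k)) (U : Set X) : Prop :=
  ∀ v : Fin k → X, ContDiffOn ℝ (⊤ : ℕ∞) (fun x => ω x v) U

section Calculus

variable {X E F W : Type*} [NormedAddCommGroup X] [NormedSpace ℝ X]
  [NormedAddCommGroup E] [NormedSpace ℝ E] [NormedAddCommGroup F] [NormedSpace ℝ F]
  [NormedAddCommGroup W] [NormedSpace ℝ W] {x : X}

theorem DifferentiableAt.linearMap_apply [FiniteDimensional ℝ E] (T : E →ₗ[ℝ] W) {f : X → E}
    (hf : DifferentiableAt ℝ f x) :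
    DifferentiableAt ℝ (fun y => T (f y)) x :=
  T.toContinuousLinearMap.differentiableAt.comp x hf

theorem fderiv_linearMap_apply [FiniteDimensional ℝ E] (T : E →ₗ[ℝ] W) {f : X → E}
    (hf : DifferentiableAt ℝ f x) (u : X) :
    fderiv ℝ (fun y => T (f y)) x u = T (fderiv ℝ f x u) :=
  congrArg (· u) (T.toContinuousLinearMap.hasFDerivAt.comp x hf.hasFDerivAt).fderiv

theorem DifferentiableAt.linearMap_apply₂ [FiniteDimensional ℝ E] [FiniteDimensional ℝ F]
    (μ : E →ₗ[ℝ] F →ₗ[ℝ] W) {f : X → E} {g : X → F}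
    (hf : DifferentiableAt ℝ f x) (hg : DifferentiableAt ℝ g x) :
    DifferentiableAt ℝ (fun y => μ (f y) (g y)) x :=
  (μ.toContinuousBilinearMap.hasFDerivAt_of_bilinear hf.hasFDerivAt hg.hasFDerivAt).differentiableAt

theorem fderiv_linearMap_apply₂ [FiniteDimensional ℝ E] [FiniteDimensional ℝ F]
    (μ : E →ₗ[ℝ] F →ₗ[ℝ] W) {f : X → E} {g : X → F}
    (hf : DifferentiableAt ℝ f x) (hg : DifferentiableAt ℝ g x) (u : X) :
    fderiv ℝ (fun y => μ (f y) (g y)) x u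
      = μ (fderiv ℝ f x u) (g x) + μ (f x) (fderiv ℝ g x u) := by
  have h := μ.toContinuousBilinearMap.hasFDerivAt_of_bilinear hf.hasFDerivAt hg.hasFDerivAt
  simp only [LinearMap.toContinuousBilinearMap_apply] at h
  simp [h.fderiv, add_comm]

theorem differentiableAt_fderiv_apply {f : X → W} (hf : ContDiffAt ℝ 2 f x) (u : X) :
    DifferentiableAt ℝ (fun y => fderiv ℝ f y u) x :=
  ((hf.fderiv_right (m := 1) (by norm_num)).differentiableAt (by norm_num)).clm_apply
    (differentiableAt_const u)

theorem fderiv_fderiv_apply_comm {f : X → W} (hf : ContDiffAt ℝ 2 f x) (u u' : X) :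
    fderiv ℝ (fun y => fderiv ℝ f y u) x u' = fderiv ℝ (fun y => fderiv ℝ f y u') x u := by
  have hdf : DifferentiableAt ℝ (fderiv ℝ f) x :=
    (hf.fderiv_right (m := 1) (by norm_num)).differentiableAt (by norm_num)
  rw [fderiv_clm_apply hdf (differentiableAt_const u),
    fderiv_clm_apply hdf (differentiableAt_const u')]
  simpa using hf.isSymmSndFDerivAt (by simp) u' u

end Calculus

section WedgeAlgebra

variable {V E F G W W' : Type*} [AddCommGroup E] [Module ℝ E] [AddCommGroup F] [Module ℝ F]
  [AddCommGroup G] [Module ℝ G] [AddCommGroup W] [Module ℝ W] [AddCommGroup W'] [Module ℝ W']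
  {k₁ k₂ : ℕ} (μ : E →ₗ[ℝ] F →ₗ[ℝ] W)

theorem wedgeRaw_add_left (ω ω' : (Fin k₁ → V) → E) (η : (Fin k₂ → V) → F) :
    wedgeRaw μ (ω + ω') η = wedgeRaw μ ω η + wedgeRaw μ ω' η := by
  funext v
  simp [wedgeRaw, Finset.sum_add_distrib]

theorem wedgeRaw_smul_left (c : ℝ) (ω : (Fin k₁ → V) → E) (η : (Fin k₂ → V) → F) :
    wedgeRaw μ (c • ω) η = c • wedgeRaw μ ω η := by
  funext v
  simp [wedgeRaw, Finset.smul_sum, smul_comm c]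

theorem wedgeRaw_add_right (ω : (Fin k₁ → V) → E) (η η' : (Fin k₂ → V) → F) :
    wedgeRaw μ ω (η + η') = wedgeRaw μ ω η + wedgeRaw μ ω η' := by
  funext v
  simp [wedgeRaw, Finset.sum_add_distrib]

theorem wedgeRaw_sub_right (ω : (Fin k₁ → V) → E) (η η' : (Fin k₂ → V) → F) :
    wedgeRaw μ ω (η - η') = wedgeRaw μ ω η - wedgeRaw μ ω η' := by
  funext v
  simp [wedgeRaw, smul_sub, Finset.sum_sub_distrib]

theorem wedgeRaw_comp_right_of_intertwining (ν : E →ₗ[ℝ] G →ₗ[ℝ] W') (T : G →ₗ[ℝ] F)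
    (S : W' →ₗ[ℝ] W) (h : ∀ a b, μ a (T b) = S (ν a b))
    (ω : (Fin k₁ → V) → E) (η : (Fin k₂ → V) → G) :
    wedgeRaw μ ω (fun v => T (η v)) = fun v => S (wedgeRaw ν ω η v) := by
  funext v
  simp [wedgeRaw, h]

theorem wedgeRaw_one_one_apply (ω : (Fin 1 → V) → E) (η : (Fin 1 → V) → F) (v : Fin 2 → V) :
    wedgeRaw μ ω η v = μ (ω ![v 0]) (η ![v 1]) - μ (ω ![v 1]) (η ![v 0]) := by
  rw [wedgeRaw, show shuffleSet 1 1 = {1, Equiv.swap 0 1} by decide]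
  repeat rw [Finset.sum_insert (by decide)]
  simp only [Nat.reduceAdd, Equiv.Perm.sign_one, Units.val_one, Equiv.Perm.coe_one, id_eq,
    Fin.natAdd_eq_addNat, Fin.addNat_one, one_smul, Fin.isValue, Finset.sum_singleton,
    Equiv.Perm.sign_swap', zero_ne_one, ↓reduceIte, Units.val_neg, Int.reduceNeg, neg_smul,
    sub_eq_add_neg]
  congr! <;> rename_i i <;> fin_cases i <;> rfl

theorem wedgeRaw_one_two_apply (ω : (Fin 1 → V) → E) (η : (Fin 2 → V) → F) (v : Fin 3 → V) :
    wedgeRaw μ ω η v = μ (ω ![v 0]) (η ![v 1, v 2]) - μ (ω ![v 1]) (η ![v 0, v 2])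
      + μ (ω ![v 2]) (η ![v 0, v 1]) := by
  rw [wedgeRaw, show shuffleSet 1 2 = {1, Equiv.swap 0 1, Equiv.swap 1 2 * Equiv.swap 0 1} by
    decide]
  repeat rw [Finset.sum_insert (by decide)]
  simp only [Nat.reduceAdd, Equiv.Perm.sign_one, Units.val_one, Equiv.Perm.coe_one, id_eq, one_smul,
    Fin.isValue, Equiv.Perm.sign_swap', zero_ne_one, ↓reduceIte, Units.val_neg, Int.reduceNeg,
    neg_smul, Finset.sum_singleton, Equiv.Perm.sign_mul, Fin.reduceEq, mul_neg, mul_one, neg_neg,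
    Equiv.Perm.coe_mul, Function.comp_apply, sub_eq_add_neg, add_assoc]
  congr! <;> rename_i i <;> fin_cases i <;> rfl

theorem wedgeRaw_one_three_apply (ω : (Fin 1 → V) → E) (η : (Fin 3 → V) → F) (v : Fin 4 → V) :
    wedgeRaw μ ω η v = μ (ω ![v 0]) (η ![v 1, v 2, v 3]) - μ (ω ![v 1]) (η ![v 0, v 2, v 3])
      + μ (ω ![v 2]) (η ![v 0, v 1, v 3]) - μ (ω ![v 3]) (η ![v 0, v 1, v 2]) := by
  rw [wedgeRaw, show shuffleSet 1 3 = {1, Equiv.swap 0 1, Equiv.swap 1 2 * Equiv.swap 0 1,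
    Equiv.swap 2 3 * Equiv.swap 1 2 * Equiv.swap 0 1} by decide]
  repeat rw [Finset.sum_insert (by decide)]
  simp only [Nat.reduceAdd, Equiv.Perm.sign_one, Units.val_one, Equiv.Perm.coe_one, id_eq, one_smul,
    Fin.isValue, Equiv.Perm.sign_swap', zero_ne_one, ↓reduceIte, Units.val_neg, Int.reduceNeg,
    neg_smul, Equiv.Perm.sign_mul, Fin.reduceEq, mul_neg, mul_one, neg_neg, Equiv.Perm.coe_mul,
    Function.comp_apply, Finset.sum_singleton, sub_eq_add_neg, add_assoc]
  congr! <;> rename_i i <;> fin_cases i <;> rfl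

theorem wedgeRaw_two_two_apply (ω : (Fin 2 → V) → E) (η : (Fin 2 → V) → F) (v : Fin 4 → V) :
    wedgeRaw μ ω η v = μ (ω ![v 0, v 1]) (η ![v 2, v 3]) - μ (ω ![v 0, v 2]) (η ![v 1, v 3])
      + μ (ω ![v 0, v 3]) (η ![v 1, v 2]) + μ (ω ![v 1, v 2]) (η ![v 0, v 3])
      - μ (ω ![v 1, v 3]) (η ![v 0, v 2]) + μ (ω ![v 2, v 3]) (η ![v 0, v 1]) := by
  rw [wedgeRaw, show shuffleSet 2 2 = {1, Equiv.swap 1 2, Equiv.swap 2 3 * Equiv.swap 1 2,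
    Equiv.swap 0 1 * Equiv.swap 1 2, Equiv.swap 2 3 * Equiv.swap 0 1 * Equiv.swap 1 2,
    Equiv.swap 0 2 * Equiv.swap 1 3} by decide]
  repeat rw [Finset.sum_insert (by decide)]
  simp only [Nat.reduceAdd, Equiv.Perm.sign_one, Units.val_one, Equiv.Perm.coe_one, id_eq,
    Fin.natAdd_eq_addNat, one_smul, Fin.isValue, Equiv.Perm.sign_swap', Fin.reduceEq, ↓reduceIte,
    Units.val_neg, Int.reduceNeg, neg_smul, Equiv.Perm.sign_mul, mul_neg, mul_one, neg_neg,
    Equiv.Perm.coe_mul, Function.comp_apply, zero_ne_one, Finset.sum_singleton, sub_eq_add_neg,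
    add_assoc]
  congr! <;> rename_i i <;> fin_cases i <;> rfl

theorem wedgeRaw_wedgeRaw_of_action (br : E →ₗ[ℝ] E →ₗ[ℝ] E) (ρ : E →ₗ[ℝ] F →ₗ[ℝ] F)
    (hρ : ∀ X X' Y, ρ (br X X') Y = ρ X (ρ X' Y) - ρ X' (ρ X Y))
    (a : (Fin 1 → V) → E) (b : (Fin 2 → V) → F) :
    wedgeRaw ρ a (wedgeRaw ρ a b) = (2 : ℝ)⁻¹ • wedgeRaw ρ (wedgeRaw br a a) b := by
  -- Typing `v` on `Fin 4` rather than `Fin (1 + (1 + 2))` makes the indices produced by the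
  -- different evaluation lemmas syntactically equal, so that `module` sees equal atoms.
  funext (v : Fin 4 → V)
  simp only [Pi.smul_apply, wedgeRaw_one_three_apply, wedgeRaw_one_two_apply,
    wedgeRaw_two_two_apply, wedgeRaw_one_one_apply, Matrix.cons_val_zero, Matrix.cons_val_one,
    Matrix.cons_val_two, Matrix.head_cons, Matrix.tail_cons, map_add, map_sub,
    LinearMap.sub_apply, hρ]
  module

end WedgeAlgebra

section FormCalculus

variable {X E F W : Type*} [NormedAddCommGroup X] [NormedSpace ℝ X]
  [NormedAddCommGroup E] [NormedSpace ℝ E] [NormedAddCommGroup F] [NormedSpace ℝ F]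
  [NormedAddCommGroup W] [NormedSpace ℝ W] {x : X} {k k₁ k₂ : ℕ}

theorem extDerivRaw_one_apply (ω : X → (Fin 1 → X) → W) (v : Fin 2 → X) :
    extDerivRaw ω x v = fderiv ℝ (fun y => ω y ![v 1]) x (v 0)
      - fderiv ℝ (fun y => ω y ![v 0]) x (v 1) := by
  simp only [extDerivRaw, Nat.reduceAdd, Int.reduceNeg, Fin.sum_univ_succ, Fin.isValue,
    Fin.coe_ofNat_eq_mod, Nat.zero_mod, pow_zero, Fin.succAbove_zero, one_smul, Finset.univ_unique,
    Fin.default_eq_zero, Fin.val_succ, Fin.val_eq_zero, zero_add, pow_one, neg_smul,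
    Finset.sum_neg_distrib, Finset.sum_singleton, Fin.succ_zero_eq_one, sub_eq_add_neg]
  congr! <;> ext i <;> fin_cases i <;> rfl

theorem extDerivRaw_two_apply (ω : X → (Fin 2 → X) → W) (v : Fin 3 → X) :
    extDerivRaw ω x v = fderiv ℝ (fun y => ω y ![v 1, v 2]) x (v 0)
      - fderiv ℝ (fun y => ω y ![v 0, v 2]) x (v 1)
      + fderiv ℝ (fun y => ω y ![v 0, v 1]) x (v 2) := by
  simp only [extDerivRaw, Nat.reduceAdd, Int.reduceNeg, Fin.sum_univ_succ, Fin.isValue,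
    Fin.coe_ofNat_eq_mod, Nat.zero_mod, pow_zero, Fin.succAbove_zero, one_smul, Fin.val_succ,
    zero_add, pow_one, Fin.succ_zero_eq_one, neg_smul, Finset.univ_unique, Fin.default_eq_zero,
    Fin.val_eq_zero, even_two, Even.neg_pow, one_pow, Finset.sum_singleton, Fin.succ_one_eq_two,
    sub_eq_add_neg, add_assoc]
  congr! <;> ext i <;> fin_cases i <;> rfl

theorem extDerivRaw_three_apply (ω : X → (Fin 3 → X) → W) (v : Fin 4 → X) :
    extDerivRaw ω x v = fderiv ℝ (fun y => ω y ![v 1, v 2, v 3]) x (v 0)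
      - fderiv ℝ (fun y => ω y ![v 0, v 2, v 3]) x (v 1)
      + fderiv ℝ (fun y => ω y ![v 0, v 1, v 3]) x (v 2)
      - fderiv ℝ (fun y => ω y ![v 0, v 1, v 2]) x (v 3) := by
  simp only [extDerivRaw, Nat.reduceAdd, Int.reduceNeg, Fin.sum_univ_succ, Fin.isValue,
    Fin.coe_ofNat_eq_mod, Nat.zero_mod, pow_zero, Fin.succAbove_zero, one_smul, Fin.val_succ,
    zero_add, pow_one, Fin.succ_zero_eq_one, neg_smul, add_assoc, even_two, Even.neg_pow, one_pow,
    Fin.succ_one_eq_two, Finset.univ_unique, Fin.default_eq_zero, Fin.val_eq_zero, Int.reducePow,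
    Finset.sum_neg_distrib, Finset.sum_singleton, Fin.reduceSucc, sub_eq_add_neg]
  congr! <;> ext i <;> fin_cases i <;> rfl

theorem extDerivRaw_add {ω η : X → (Fin k → X) → W}
    (hω : ∀ w, DifferentiableAt ℝ (fun y => ω y w) x)
    (hη : ∀ w, DifferentiableAt ℝ (fun y => η y w) x) :
    extDerivRaw (fun y => ω y + η y) x = extDerivRaw ω x + extDerivRaw η x := by
  funext v
  simp [extDerivRaw, fderiv_fun_add (hω _) (hη _), Finset.sum_add_distrib]

theorem extDerivRaw_sub {ω η : X → (Fin k → X) → W}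
    (hω : ∀ w, DifferentiableAt ℝ (fun y => ω y w) x)
    (hη : ∀ w, DifferentiableAt ℝ (fun y => η y w) x) :
    extDerivRaw (fun y => ω y - η y) x = extDerivRaw ω x - extDerivRaw η x := by
  funext v
  simp [extDerivRaw, fderiv_fun_sub (hω _) (hη _), smul_sub, Finset.sum_sub_distrib]

theorem extDerivRaw_linearMap_comp [FiniteDimensional ℝ E] (T : E →ₗ[ℝ] W)
    {ω : X → (Fin k → X) → E} (hω : ∀ w, DifferentiableAt ℝ (fun y => ω y w) x) :
    extDerivRaw (fun y v => T (ω y v)) x = fun v => T (extDerivRaw ω x v) := by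
  funext v
  simp [extDerivRaw, fderiv_linearMap_apply T (hω _)]

theorem differentiableAt_wedgeRaw_apply [FiniteDimensional ℝ E] [FiniteDimensional ℝ F]
    (μ : E →ₗ[ℝ] F →ₗ[ℝ] W) {ω : X → (Fin k₁ → X) → E} {η : X → (Fin k₂ → X) → F}
    (hω : ∀ a, DifferentiableAt ℝ (fun y => ω y a) x)
    (hη : ∀ b, DifferentiableAt ℝ (fun y => η y b) x) (w : Fin (k₁ + k₂) → X) :
    DifferentiableAt ℝ (fun y => wedgeRaw μ (ω y) (η y) w) x :=
  DifferentiableAt.fun_sum fun _ _ => ((hω _).linearMap_apply₂ μ (hη _)).fun_const_smul _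

theorem fderiv_wedgeRaw_apply [FiniteDimensional ℝ E] [FiniteDimensional ℝ F]
    (μ : E →ₗ[ℝ] F →ₗ[ℝ] W) {ω : X → (Fin k₁ → X) → E} {η : X → (Fin k₂ → X) → F}
    (hω : ∀ a, DifferentiableAt ℝ (fun y => ω y a) x)
    (hη : ∀ b, DifferentiableAt ℝ (fun y => η y b) x) (w : Fin (k₁ + k₂) → X) (u : X) :
    fderiv ℝ (fun y => wedgeRaw μ (ω y) (η y) w) x u
      = wedgeRaw μ (fun a => fderiv ℝ (fun y => ω y a) x u) (η x) w
        + wedgeRaw μ (ω x) (fun b => fderiv ℝ (fun y => η y b) x u) w := by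
  simp only [wedgeRaw]
  rw [fderiv_fun_sum fun _ _ => ((hω _).linearMap_apply₂ μ (hη _)).fun_const_smul _,
    sum_apply, ← Finset.sum_add_distrib]
  refine Finset.sum_congr rfl fun σ _ => ?_
  rw [fderiv_fun_const_smul ((hω _).linearMap_apply₂ μ (hη _)), smul_apply,
    fderiv_linearMap_apply₂ μ (hω _) (hη _), smul_add]

theorem differentiableAt_extDerivRaw_apply {ω : X → (Fin k → X) → W}
    (hω : ∀ w, ContDiffAt ℝ 2 (fun y => ω y w) x) (w : Fin (k + 1) → X) :
    DifferentiableAt ℝ (fun y => extDerivRaw ω y w) x :=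
  DifferentiableAt.fun_sum fun _ _ => (differentiableAt_fderiv_apply (hω _) _).fun_const_smul _

theorem fderiv_extDerivRaw_apply {ω : X → (Fin k → X) → W}
    (hω : ∀ w, ContDiffAt ℝ 2 (fun y => ω y w) x) (w : Fin (k + 1) → X) (u : X) :
    fderiv ℝ (fun y => extDerivRaw ω y w) x u
      = extDerivRaw (fun y a => fderiv ℝ (fun z => ω z a) y u) x w := by
  simp only [extDerivRaw]
  rw [fderiv_fun_sum fun _ _ => (differentiableAt_fderiv_apply (hω _) _).fun_const_smul _,
    sum_apply]
  refine Finset.sum_congr rfl fun i _ => ?_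
  rw [fderiv_fun_const_smul (differentiableAt_fderiv_apply (hω _) _), smul_apply,
    fderiv_fderiv_apply_comm (hω _)]

theorem extDerivRaw_extDerivRaw_two {ω : X → (Fin 2 → X) → W}
    (hω : ∀ w, ContDiffAt ℝ 2 (fun y => ω y w) x) :
    extDerivRaw (extDerivRaw ω) x = 0 := by
  funext (v : Fin 4 → X)
  have hcomm := fun w => fderiv_fderiv_apply_comm (hω w)
  rw [extDerivRaw_three_apply]
  simp only [fderiv_extDerivRaw_apply hω]
  simp only [extDerivRaw_two_apply,
    Matrix.cons_val_zero, Matrix.cons_val_one, Matrix.cons_val_two, Matrix.head_cons,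
    Matrix.tail_cons, Pi.zero_apply, hcomm]
  abel

theorem extDerivRaw_wedgeRaw_one_two [FiniteDimensional ℝ E] [FiniteDimensional ℝ F]
    (μ : E →ₗ[ℝ] F →ₗ[ℝ] W) {ω : X → (Fin 1 → X) → E} {η : X → (Fin 2 → X) → F}
    (hω : ∀ a, DifferentiableAt ℝ (fun y => ω y a) x)
    (hη : ∀ b, DifferentiableAt ℝ (fun y => η y b) x) :
    extDerivRaw (fun y => wedgeRaw μ (ω y) (η y)) x
      = wedgeRaw μ (extDerivRaw ω x) (η x) - wedgeRaw μ (ω x) (extDerivRaw η x) := by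
  funext (v : Fin 4 → X)
  rw [Pi.sub_apply, extDerivRaw_three_apply]
  simp only [fderiv_wedgeRaw_apply μ hω hη]
  simp only [wedgeRaw_one_two_apply, wedgeRaw_two_two_apply, wedgeRaw_one_three_apply,
    extDerivRaw_one_apply, extDerivRaw_two_apply, Matrix.cons_val_zero, Matrix.cons_val_one,
    Matrix.cons_val_two, Matrix.head_cons, Matrix.tail_cons, map_sub, map_add,
    LinearMap.sub_apply]
  abel

end FormCalculus

theorem SmoothFormOn.contDiffAt {X E : Type*} [NormedAddCommGroup X] [NormedSpace ℝ X]
    [NormedAddCommGroup E] [NormedSpace ℝ E] {k : ℕ} {ω : X → AlternatingMap ℝ X E (Fin k)}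
    {U : Set X} (hω : SmoothFormOn ω U) (hU : IsOpen U) {x : X} (hx : x ∈ U) (v : Fin k → X) :
    ContDiffAt ℝ 2 (fun y => ω y v) x :=
  ((hω v).contDiffAt (hU.mem_nhds hx)).of_le (WithTop.coe_le_coe.mpr le_top)

theorem stmt15_general {d : ℕ} {g h l : Type*}
    [NormedAddCommGroup g] [NormedSpace ℝ g] [FiniteDimensional ℝ g]
    [NormedAddCommGroup h] [NormedSpace ℝ h] [FiniteDimensional ℝ h]
    [NormedAddCommGroup l] [NormedSpace ℝ l] [FiniteDimensional ℝ l]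
    (br : g →ₗ[ℝ] g →ₗ[ℝ] g)
    (αt : h →ₗ[ℝ] g) (βt : l →ₗ[ℝ] h)
    (ρh : g →ₗ[ℝ] h →ₗ[ℝ] h) (ρl : g →ₗ[ℝ] l →ₗ[ℝ] l)
    (hρh_action : ∀ (X X' : g) (Y : h),
      ρh (br X X') Y = ρh X (ρh X' Y) - ρh X' (ρh X Y))
    (hβρ : ∀ (X : g) (Z : l), βt (ρl X Z) = ρh X (βt Z))
    (pf : h →ₗ[ℝ] h →ₗ[ℝ] l)
    (U : Set (Fin d → ℝ)) (hU : IsOpen U)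
    (A : (Fin d → ℝ) → AlternatingMap ℝ (Fin d → ℝ) g (Fin 1))
    (B : (Fin d → ℝ) → AlternatingMap ℝ (Fin d → ℝ) h (Fin 2))
    (C : (Fin d → ℝ) → AlternatingMap ℝ (Fin d → ℝ) l (Fin 3))
    (hA : SmoothFormOn A U) (hB : SmoothFormOn B U) (hC : SmoothFormOn C U)
    (F₁ : (Fin d → ℝ) → (Fin 2 → (Fin d → ℝ)) → g)
    (hF₁ : ∀ y, F₁ y =
      extDerivRaw (fun z => ⇑(A z)) y + (2 : ℝ)⁻¹ • wedgeRaw br ⇑(A y) ⇑(A y)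
        - (fun v => αt (B y v)))
    (F₂ : (Fin d → ℝ) → (Fin 3 → (Fin d → ℝ)) → h)
    (hF₂ : ∀ y, F₂ y =
      extDerivRaw (fun z => ⇑(B z)) y + wedgeRaw ρh ⇑(A y) ⇑(B y)
        - (fun v => βt (C y v)))
    (Ω₃ : (Fin d → ℝ) → (Fin 4 → (Fin d → ℝ)) → l)
    (hΩ₃ : ∀ y, Ω₃ y =
      extDerivRaw (fun z => ⇑(C z)) y + wedgeRaw ρl ⇑(A y) ⇑(C y)
        + wedgeRaw pf ⇑(B y) ⇑(B y)) :
    ∀ x ∈ U,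
      extDerivRaw F₂ x + wedgeRaw ρh ⇑(A x) (F₂ x)
        = wedgeRaw ρh (fun v => F₁ x v + αt (B x v)) ⇑(B x)
          - (fun v => βt ((Ω₃ x - wedgeRaw pf ⇑(B x) ⇑(B x)) v)) := by
  intro x hx
  have hA₂ := hA.contDiffAt hU hx
  have hB₂ := hB.contDiffAt hU hx
  have hC₂ := hC.contDiffAt hU hx
  have hA₁ w := (hA₂ w).differentiableAt two_ne_zero
  have hB₁ w := (hB₂ w).differentiableAt two_ne_zero
  have hC₁ w := (hC₂ w).differentiableAt two_ne_zero
  have hdF₂ : extDerivRaw F₂ x = wedgeRaw ρh (extDerivRaw (fun z => ⇑(A z)) x) (B x)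
      - wedgeRaw ρh (A x) (extDerivRaw (fun z => ⇑(B z)) x)
      - fun v => βt (extDerivRaw (fun z => ⇑(C z)) x v) := by
    have hdB w := differentiableAt_extDerivRaw_apply hB₂ w
    have hAB w := differentiableAt_wedgeRaw_apply ρh hA₁ hB₁ w
    have hβC w := (hC₁ w).linearMap_apply βt
    rw [funext hF₂, extDerivRaw_sub _ hβC, extDerivRaw_add hdB hAB,
      extDerivRaw_extDerivRaw_two hB₂, extDerivRaw_wedgeRaw_one_two ρh hA₁ hB₁,
      extDerivRaw_linearMap_comp βt hC₁, zero_add]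
    exact fun w => (hdB w).fun_add (hAB w)
  have hAF₂ : wedgeRaw ρh (A x) (F₂ x) = wedgeRaw ρh (A x) (extDerivRaw (fun z => ⇑(B z)) x)
      + (2 : ℝ)⁻¹ • wedgeRaw ρh (wedgeRaw br (A x) (A x)) (B x)
      - fun v => βt (wedgeRaw ρl (A x) (C x) v) := by
    rw [hF₂, wedgeRaw_sub_right, wedgeRaw_add_right, wedgeRaw_wedgeRaw_of_action br ρh hρh_action,
      wedgeRaw_comp_right_of_intertwining ρh ρl βt βt fun a b => (hβρ a b).symm]
  have hF₁B : (fun v => F₁ x v + αt (B x v))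
      = extDerivRaw (fun z => ⇑(A z)) x + (2 : ℝ)⁻¹ • wedgeRaw br (A x) (A x) := by
    funext v
    simp [hF₁]
  rw [hdF₂, hAF₂, hF₁B, wedgeRaw_add_left, wedgeRaw_smul_left, hΩ₃]
  funext v
  simp only [Nat.reduceAdd, Pi.add_apply, Pi.sub_apply, Pi.smul_apply, add_sub_cancel_right,
    map_add]
  abel

/-- let `g` be a finite-dimensional real Lie algebra (bracket `br`,
alternating and Jacobi), `h`, `l` finite-dimensional real vector spaces, `α̃ : h → g`,
`β̃ : l → h` linear, `▷ : g × h → h` a bilinear Lie algebra action, `▷ : g × l → l`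
bilinear with `β̃` equivariant (`β̃(X ▷ Z) = X ▷ β̃(Z)`), and `{,} : h × h → l` bilinear.
For a smooth `g`-valued 1-form `A`, a smooth `h`-valued 2-form `B` and a smooth
`l`-valued 3-form `C` on an open `U ⊆ ℝ^d`, with `F₁ := dA + ½ A ∧^{[,]} A − α̃ ∘ B`,
`F₂ := dB + A ∧^▷ B − β̃ ∘ C` and `Ω₃ := dC + A ∧^▷ C + B ∧^{{,}} B`, the second
3-Bianchi identity `dF₂ + A ∧^▷ F₂ = (F₁ + α̃ ∘ B) ∧^▷ B − β̃ ∘ (Ω₃ − B ∧^{{,}} B)`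
holds on `U`. -/
theorem stmt15 {d : ℕ} {g h l : Type*}
    [NormedAddCommGroup g] [NormedSpace ℝ g] [FiniteDimensional ℝ g]
    [NormedAddCommGroup h] [NormedSpace ℝ h] [FiniteDimensional ℝ h]
    [NormedAddCommGroup l] [NormedSpace ℝ l] [FiniteDimensional ℝ l]
    (br : g →ₗ[ℝ] g →ₗ[ℝ] g)
    (br_alt : ∀ X : g, br X X = 0)
    (br_jacobi : ∀ X Y Z : g, br X (br Y Z) = br (br X Y) Z + br Y (br X Z))
    (αt : h →ₗ[ℝ] g) (βt : l →ₗ[ℝ] h)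
    (ρh : g →ₗ[ℝ] h →ₗ[ℝ] h) (ρl : g →ₗ[ℝ] l →ₗ[ℝ] l)
    (hρh_action : ∀ (X X' : g) (Y : h),
      ρh (br X X') Y = ρh X (ρh X' Y) - ρh X' (ρh X Y))
    (hβρ : ∀ (X : g) (Z : l), βt (ρl X Z) = ρh X (βt Z))
    (pf : h →ₗ[ℝ] h →ₗ[ℝ] l)
    (U : Set (Fin d → ℝ)) (hU : IsOpen U)
    (A : (Fin d → ℝ) → AlternatingMap ℝ (Fin d → ℝ) g (Fin 1))
    (B : (Fin d → ℝ) → AlternatingMap ℝ (Fin d → ℝ) h (Fin 2))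
    (C : (Fin d → ℝ) → AlternatingMap ℝ (Fin d → ℝ) l (Fin 3))
    (hA : SmoothFormOn A U) (hB : SmoothFormOn B U) (hC : SmoothFormOn C U)
    (F₁ : (Fin d → ℝ) → (Fin 2 → (Fin d → ℝ)) → g)
    (hF₁ : ∀ y, F₁ y =
      extDerivRaw (fun z => ⇑(A z)) y + (2 : ℝ)⁻¹ • wedgeRaw br ⇑(A y) ⇑(A y)
        - (fun v => αt (B y v)))
    (F₂ : (Fin d → ℝ) → (Fin 3 → (Fin d → ℝ)) → h)
    (hF₂ : ∀ y, F₂ y =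
      extDerivRaw (fun z => ⇑(B z)) y + wedgeRaw ρh ⇑(A y) ⇑(B y)
        - (fun v => βt (C y v)))
    (Ω₃ : (Fin d → ℝ) → (Fin 4 → (Fin d → ℝ)) → l)
    (hΩ₃ : ∀ y, Ω₃ y =
      extDerivRaw (fun z => ⇑(C z)) y + wedgeRaw ρl ⇑(A y) ⇑(C y)
        + wedgeRaw pf ⇑(B y) ⇑(B y)) :
    ∀ x ∈ U,
      extDerivRaw F₂ x + wedgeRaw ρh ⇑(A x) (F₂ x)
        = wedgeRaw ρh (fun v => F₁ x v + αt (B x v)) ⇑(B x)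
          - (fun v => βt ((Ω₃ x - wedgeRaw pf ⇑(B x) ⇑(B x)) v)) :=
  stmt15_general br αt βt ρh ρl hρh_action hβρ pf U hU A B C hA hB hC F₁ hF₁ F₂ hF₂ Ω₃ hΩ₃
end
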